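/- arXiv:1708.07375 — 3 statements merged into one kernel-verified Lean document; each statement's English description precedes it below -/
import Mathlib

section
/- Let λ ≤ 0, ω > 0 and V : ℝ → ℝ bounded, nonnegative, measurable, with L(V) = -d²/dt² + ω² + λV nonnegative in the quadratic form sense on H¹(ℝ). Then for every u in the Schwartz class on ℝ² (with A = (-By,0), B ∈ ℝ), the quadratic form Q[u] = ∫_{ℝ²} ( |i ∂u/∂x - B y u|² + |∂u/∂y|² + (ω² y² + λ y² V(xy)) |u|² ) dx dy is nonnegative. -/
/-!
Drop `|∂u/∂y|² ≥ 0` and integrate over `x` first, for fixed `y ≠ 0`. On the slice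
`f(x) = u(x, y)` the gauge transform `φ(x) = e^{iByx} f(x)` turns `i f' - B y f` into `i φ'`
without changing `|f|`, and the rescaling `w(t) = φ(t / y)` turns
`∫ |φ'|² + y² (ω² + λ V(xy)) |φ|² dx` into `|y|` times the form of `L(V)` at `w`,
which is nonnegative by assumption.
-/

open MeasureTheory Complex

noncomputable def schrodingerForm (ω lam : ℝ) (V : ℝ → ℝ) (w : ℝ → ℂ) : ℝ :=
  ∫ t : ℝ, (‖deriv w t‖ ^ 2 + (ω ^ 2 + lam * V t) * ‖w t‖ ^ 2)

/-- The form domain on which `L(V) ≥ 0` is assumed: classical derivatives instead of weak ones. -/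
structure MemH1 (w : ℝ → ℂ) : Prop where
  differentiable : Differentiable ℝ w
  memLp : MemLp w 2
  memLp_deriv : MemLp (deriv w) 2

theorem SchwartzMap.memH1 (f : SchwartzMap ℝ ℂ) : MemH1 f :=
  ⟨f.differentiable, f.memLp 2, funext (derivCLM_apply ℝ f) ▸ (derivCLM ℝ ℂ f).memLp 2⟩

theorem MeasureTheory.MemLp.comp_mul_left {E : Type*} [NormedAddCommGroup E]
    {f : ℝ → E} {p : ENNReal} (hf : MemLp f p) {c : ℝ} (hc : c ≠ 0) :
    MemLp (fun x => f (c * x)) p := by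
  refine MemLp.comp_of_map (f := (c * ·)) ?_ (measurable_const_mul c).aemeasurable
  rw [Real.map_volume_mul_left hc]
  exact hf.smul_measure ENNReal.ofReal_ne_top

theorem hasDerivAt_gauge {f : ℝ → ℂ} {x : ℝ} (hf : DifferentiableAt ℝ f x) (a : ℝ) :
    HasDerivAt (fun x : ℝ => cexp (a * x * I) * f x)
      (cexp (a * x * I) * (deriv f x + a * I * f x)) x := by
  have hphase : HasDerivAt (fun x : ℝ => cexp (a * x * I)) (cexp (a * x * I) * (a * I)) x := by
    simpa using ((ofRealCLM.hasDerivAt (x := x)).const_mul (a : ℂ)).mul_const I |>.cexp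
  exact (hphase.mul hf.hasDerivAt).congr_deriv (by ring)

theorem norm_cexp_mul_I_mul (a x : ℝ) (z : ℂ) : ‖cexp (a * x * I) * z‖ = ‖z‖ := by
  rw [norm_mul, ← ofReal_mul, norm_exp_ofReal_mul_I, one_mul]

namespace MemH1

theorem comp_mul_left {w : ℝ → ℂ} (hw : MemH1 w) {c : ℝ} (hc : c ≠ 0) :
    MemH1 (fun t => w (c * t)) where
  differentiable := hw.differentiable.comp (differentiable_id.const_mul c)
  memLp := hw.memLp.comp_mul_left hc
  memLp_deriv := by
    rw [funext (deriv_comp_mul_left c w)]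
    exact (hw.memLp_deriv.comp_mul_left hc).const_smul c

theorem gauge {f : ℝ → ℂ} (hf : MemH1 f) (a : ℝ) :
    MemH1 (fun x : ℝ => cexp (a * x * I) * f x) := by
  have hderiv := fun x => hasDerivAt_gauge (hf.differentiable x) a
  have hdiff : Differentiable ℝ (fun x : ℝ => cexp (a * x * I) * f x) :=
    fun x => (hderiv x).differentiableAt
  have hphase : Continuous fun x : ℝ => cexp (a * x * I) := by fun_prop
  refine ⟨hdiff, ?_, ?_⟩
  · exact hf.memLp.congr_norm hdiff.continuous.aestronglyMeasurable
      (.of_forall fun x => (norm_cexp_mul_I_mul a x _).symm)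
  · have hsum : MemLp (fun x => deriv f x + a * I * f x) 2 :=
      hf.memLp_deriv.add (hf.memLp.const_mul _)
    rw [funext fun x => (hderiv x).deriv]
    exact hsum.congr_norm (hphase.aestronglyMeasurable.mul hsum.aestronglyMeasurable)
      (.of_forall fun x => (norm_cexp_mul_I_mul a x _).symm)

end MemH1

theorem integral_scaled_form_nonneg {ω lam : ℝ} {V : ℝ → ℝ}
    (hform : ∀ w, MemH1 w → 0 ≤ schrodingerForm ω lam V w)
    {φ : ℝ → ℂ} (hφ : MemH1 φ) {y : ℝ} (hy : y ≠ 0) :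
    0 ≤ ∫ x : ℝ, (‖deriv φ x‖ ^ 2 + y ^ 2 * (ω ^ 2 + lam * V (x * y)) * ‖φ x‖ ^ 2) := by
  set g : ℝ → ℝ := fun t =>
    ‖deriv (fun t => φ (y⁻¹ * t)) t‖ ^ 2 + (ω ^ 2 + lam * V t) * ‖φ (y⁻¹ * t)‖ ^ 2
  have hg : ∀ x, ‖deriv φ x‖ ^ 2 + y ^ 2 * (ω ^ 2 + lam * V (x * y)) * ‖φ x‖ ^ 2
      = y ^ 2 * g (y * x) := by
    intro x
    simp only [g, deriv_comp_mul_left, inv_mul_cancel_left₀ hy, norm_smul, norm_inv,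
      Real.norm_eq_abs, mul_pow, inv_pow, sq_abs, mul_comm x y]
    field_simp
  calc (0 : ℝ) ≤ y ^ 2 * (|y⁻¹| * ∫ t, g t) :=
        mul_nonneg (sq_nonneg y)
          (mul_nonneg (abs_nonneg _) (hform _ (hφ.comp_mul_left (inv_ne_zero hy))))
    _ = _ := by
        rw [← smul_eq_mul (a := |y⁻¹|), ← Measure.integral_comp_mul_left, ← integral_const_mul]
        exact integral_congr_ae (.of_forall fun x => (hg x).symm)

namespace SchwartzMap

variable {E E' F : Type*} [NormedAddCommGroup E] [NormedSpace ℝ E]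
  [NormedAddCommGroup E'] [NormedSpace ℝ E'] [NormedAddCommGroup F] [NormedSpace ℝ F]

theorem hasTemperateGrowth_prodMk_const (y : E') : (fun x : E => (x, y)).HasTemperateGrowth := by
  convert (ContinuousLinearMap.inl ℝ E E').hasTemperateGrowth.add
    (Function.HasTemperateGrowth.const ((0 : E), y)) using 1
  ext x <;> simp

noncomputable def sliceFst (u : 𝓢(E × E', F)) (y : E') : 𝓢(E, F) :=
  compCLM ℝ (hasTemperateGrowth_prodMk_const y)
    ⟨1, 1, fun x => by simpa using (norm_fst_le (x, y)).trans (le_add_of_nonneg_left zero_le_one)⟩ u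

@[simp]
theorem sliceFst_apply (u : 𝓢(E × E', F)) (y : E') (x : E) : u.sliceFst y x = u (x, y) := rfl

theorem deriv_sliceFst (u : 𝓢(ℝ × E', F)) (y : E') (x : ℝ) :
    deriv (u.sliceFst y) x = fderiv ℝ u (x, y) (1, 0) :=
  ((u.hasFDerivAt (x, y)).comp_hasDerivAt x
    ((hasDerivAt_id x).prodMk (hasDerivAt_const x y))).deriv

theorem integrable_sq_norm_fderiv_sliceFst (u : 𝓢(ℝ × E', F)) (v : ℝ × E') (y : E') :
    Integrable fun x : ℝ => ‖fderiv ℝ u (x, y) v‖ ^ 2 := by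
  have h := ((LineDeriv.lineDerivOp v u).sliceFst y).memLp 2
  simpa [lineDerivOp_apply_eq_fderiv] using (memLp_two_iff_integrable_sq_norm h.1).1 h

end SchwartzMap

section LandauGauge

variable {ω lam : ℝ} {V : ℝ → ℝ}

theorem integral_slice_landau_nonneg (hform : ∀ w, MemH1 w → 0 ≤ schrodingerForm ω lam V w)
    (u : SchwartzMap (ℝ × ℝ) ℂ) (B y : ℝ) :
    0 ≤ ∫ x : ℝ, (‖I * fderiv ℝ u (x, y) (1, 0) - B * y * u (x, y)‖ ^ 2
      + (ω ^ 2 * y ^ 2 + lam * y ^ 2 * V (x * y)) * ‖u (x, y)‖ ^ 2) := by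
  rcases eq_or_ne y 0 with rfl | hy
  · exact integral_nonneg fun x => by simp
  set f := u.sliceFst y
  have hf : MemH1 f := f.memH1
  refine (integral_scaled_form_nonneg hform (hf.gauge (B * y)) hy).trans_eq
    (integral_congr_ae (.of_forall fun x => ?_))
  have hgauge : I * fderiv ℝ u (x, y) (1, 0) - B * y * u (x, y)
      = I * (deriv f x + (B * y : ℝ) * I * f x) := by
    simp only [f, SchwartzMap.deriv_sliceFst, SchwartzMap.sliceFst_apply]
    push_cast
    linear_combination (-(B * y * u (x, y))) * I_sq
  dsimp only
  rw [(hasDerivAt_gauge (hf.differentiable x) _).deriv, norm_cexp_mul_I_mul,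
    norm_cexp_mul_I_mul, hgauge, norm_mul, norm_I, one_mul, u.sliceFst_apply]
  ring

theorem integral_slice_landau_add_sq_deriv_nonneg
    (hform : ∀ w, MemH1 w → 0 ≤ schrodingerForm ω lam V w)
    (u : SchwartzMap (ℝ × ℝ) ℂ) (B y : ℝ) :
    0 ≤ ∫ x : ℝ, (‖I * fderiv ℝ u (x, y) (1, 0) - B * y * u (x, y)‖ ^ 2
      + ‖fderiv ℝ u (x, y) (0, 1)‖ ^ 2
      + (ω ^ 2 * y ^ 2 + lam * y ^ 2 * V (x * y)) * ‖u (x, y)‖ ^ 2) := by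
  set G := fun x : ℝ => ‖I * fderiv ℝ u (x, y) (1, 0) - B * y * u (x, y)‖ ^ 2
      + ‖fderiv ℝ u (x, y) (0, 1)‖ ^ 2
      + (ω ^ 2 * y ^ 2 + lam * y ^ 2 * V (x * y)) * ‖u (x, y)‖ ^ 2
  by_cases hG : Integrable G
  swap
  · rw [integral_undef hG]
  have hdy := u.integrable_sq_norm_fderiv_sliceFst (0, 1) y
  refine (integral_slice_landau_nonneg hform u B y).trans (integral_mono ?_ hG fun x => ?_)
  · exact (hG.sub hdy).congr (.of_forall fun x => by simp only [G, Pi.sub_apply]; ring)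
  · linarith [sq_nonneg ‖fderiv ℝ u (x, y) (0, 1)‖]

end LandauGauge

theorem stmt_11_general (lam ω B : ℝ) (V : ℝ → ℝ)
    (hform : ∀ w : ℝ → ℂ, (∀ t, DifferentiableAt ℝ w t) →
      MemLp w 2 (volume : Measure ℝ) → MemLp (deriv w) 2 (volume : Measure ℝ) →
      0 ≤ ∫ t : ℝ, (‖deriv w t‖ ^ 2 + (ω ^ 2 + lam * V t) * ‖w t‖ ^ 2)) :
    ∀ u : SchwartzMap (ℝ × ℝ) ℂ,
      0 ≤ ∫ p : ℝ × ℝ,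
        (‖Complex.I * fderiv ℝ (fun q => u q) p (1, 0) - (B : ℂ) * (p.2 : ℂ) * u p‖ ^ 2
          + ‖fderiv ℝ (fun q => u q) p (0, 1)‖ ^ 2
          + (ω ^ 2 * p.2 ^ 2 + lam * p.2 ^ 2 * V (p.1 * p.2)) * ‖u p‖ ^ 2) := by
  intro u
  by_cases hG : Integrable (fun p : ℝ × ℝ =>
      ‖I * fderiv ℝ u p (1, 0) - (B : ℂ) * (p.2 : ℂ) * u p‖ ^ 2 + ‖fderiv ℝ u p (0, 1)‖ ^ 2
        + (ω ^ 2 * p.2 ^ 2 + lam * p.2 ^ 2 * V (p.1 * p.2)) * ‖u p‖ ^ 2)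
  swap
  · exact (integral_undef hG).ge
  rw [Measure.volume_eq_prod] at hG ⊢
  rw [integral_prod_symm _ hG]
  exact integral_nonneg fun y =>
    integral_slice_landau_add_sq_deriv_nonneg (fun w hw => hform w hw.1 hw.2 hw.3) u B y

/-- Positivity of the quadratic form of the magnetic operator
H(A) = (i∇+A)² + ω²y² + λy²V(xy) in the Landau gauge A = (-By, 0),
assuming L(V) = -d²/dt² + ω² + λV is nonnegative. -/
theorem stmt_11 (lam ω B : ℝ) (hlam : lam ≤ 0) (hω : 0 < ω)
    (V : ℝ → ℝ) (hVmeas : Measurable V) (hVnonneg : ∀ t, 0 ≤ V t)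
    (hVbdd : ∃ C : ℝ, ∀ t, |V t| ≤ C)
    (hform : ∀ w : ℝ → ℂ, (∀ t, DifferentiableAt ℝ w t) →
      MemLp w 2 (volume : Measure ℝ) → MemLp (deriv w) 2 (volume : Measure ℝ) →
      0 ≤ ∫ t : ℝ, (‖deriv w t‖ ^ 2 + (ω ^ 2 + lam * V t) * ‖w t‖ ^ 2)) :
    ∀ u : SchwartzMap (ℝ × ℝ) ℂ,
      0 ≤ ∫ p : ℝ × ℝ,
        (‖Complex.I * fderiv ℝ (fun q => u q) p (1, 0) - (B : ℂ) * (p.2 : ℂ) * u p‖ ^ 2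
          + ‖fderiv ℝ (fun q => u q) p (0, 1)‖ ^ 2
          + (ω ^ 2 * p.2 ^ 2 + lam * p.2 ^ 2 * V (p.1 * p.2)) * ‖u p‖ ^ 2) :=
  stmt_11_general lam ω B V hform
end

section
/- Let λ < 0, h(t) = √(|λ|/2) e^{-(|λ|/2)|t|}, and for n ∈ ℕ, n ≥ 1, let χ : ℝ → ℝ be smooth with support in [1,2] and ∫_1^2 χ(z)² dz = 1. Define ψ_n(x,y) = h(xy) e^{i√μ y} χ(y/n) for μ ≥ 0. Then ∫_{ℝ²} |ψ_n(x,y)|² dx dy = ∫_1^2 χ(z)²/z dz, which is independent of n and lies in [1/2, 1]. -/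
open MeasureTheory intervalIntegral

/-- Norm computation for the critical-case Weyl sequence
ψ_n(x,y) = h(xy) e^{i√μ y} χ(y/n). -/
theorem stmt_15 (lam : ℝ) (hlam : lam < 0)
    (h : ℝ → ℝ) (hdef : ∀ t, h t = Real.sqrt (|lam| / 2) * Real.exp (-(|lam| / 2) * |t|))
    (n : ℕ) (hn : 1 ≤ n)
    (χ : ℝ → ℝ) (hχ : ContDiff ℝ (⊤ : ℕ∞) χ) (hχsupp : tsupport χ ⊆ Set.Icc 1 2)
    (hχnorm : (∫ z in (1 : ℝ)..2, (χ z) ^ 2) = 1)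
    (μ : ℝ) (hμ : 0 ≤ μ)
    (ψ : ℝ × ℝ → ℂ)
    (hψ : ∀ x y : ℝ, ψ (x, y) = (h (x * y) : ℂ)
        * Complex.exp (Complex.I * Real.sqrt μ * y) * (χ (y / n) : ℂ)) :
    (∫ p : ℝ × ℝ, ‖ψ p‖ ^ 2) = (∫ z in (1 : ℝ)..2, (χ z) ^ 2 / z) ∧
    (1 / 2 : ℝ) ≤ (∫ z in (1 : ℝ)..2, (χ z) ^ 2 / z) ∧
    (∫ z in (1 : ℝ)..2, (χ z) ^ 2 / z) ≤ 1 := by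
  have hlam0 : (0:ℝ) < |lam| := abs_pos.mpr hlam.ne
  set a : ℝ := |lam| / 2 with ha
  have ha0 : (0:ℝ) < a := by positivity
  have hnpos : (0:ℝ) < (n:ℝ) := by exact_mod_cast Nat.pos_of_ne_zero (by omega)
  have hn' : (1:ℝ) ≤ (n:ℝ) := by exact_mod_cast hn
  have hχc : Continuous χ := hχ.continuous
  have hχ0 : ∀ z : ℝ, z ∉ Set.Icc (1:ℝ) 2 → χ z = 0 := fun z hz =>
    image_eq_zero_of_notMem_tsupport (fun hm => hz (hχsupp hm))
  -- square of h
  have hsq : ∀ t : ℝ, h t ^ 2 = a * Real.exp (-|lam| * |t|) := by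
    intro t
    rw [hdef, mul_pow, Real.sq_sqrt (by positivity), sq, ← Real.exp_add]
    congr 1
    rw [ha]
    ring
  -- integral of h^2 is 1
  have h3 : (∫ x in Set.Ioi (0:ℝ), Real.exp (-|lam| * x)) = |lam|⁻¹ := by
    have h4 := integral_comp_mul_left_Ioi (fun u => Real.exp (-u)) 0 hlam0
    simp only [mul_zero] at h4
    simp only [neg_mul]
    rw [h4, integral_exp_neg_Ioi_zero, smul_eq_mul, mul_one]
  have hint_h : (∫ t : ℝ, h t ^ 2) = 1 := by
    have e1 : (∫ t : ℝ, h t ^ 2) = a * ∫ t : ℝ, Real.exp (-|lam| * |t|) := by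
      simp_rw [hsq]; exact integral_const_mul a _
    have e2 : (∫ t : ℝ, Real.exp (-|lam| * |t|))
        = 2 * ∫ t in Set.Ioi (0:ℝ), Real.exp (-|lam| * t) :=
      integral_comp_abs (f := fun t => Real.exp (-|lam| * t))
    rw [e1, e2, h3, ha]
    field_simp
  -- inner integral
  have hinner : ∀ y : ℝ, 0 < y → (∫ x : ℝ, h (x * y) ^ 2) = y⁻¹ := by
    intro y hy
    rw [MeasureTheory.Measure.integral_comp_mul_right (fun t => h t ^ 2) y, hint_h,
      smul_eq_mul, mul_one, abs_of_pos (inv_pos.2 hy)]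
  -- the squared norm as a real function
  set F : ℝ × ℝ → ℝ := fun p => h (p.1 * p.2) ^ 2 * χ (p.2 / n) ^ 2 with hF
  have hnorm : ∀ p : ℝ × ℝ, ‖ψ p‖ ^ 2 = F p := by
    rintro ⟨x, y⟩
    rw [hψ]
    have he : ‖Complex.exp (Complex.I * (Real.sqrt μ : ℂ) * (y : ℂ))‖ = 1 := by
      rw [Complex.norm_exp]
      simp [Complex.mul_re]
    rw [norm_mul, norm_mul, he, mul_one, Complex.norm_real, Complex.norm_real,
      Real.norm_eq_abs, Real.norm_eq_abs]
    simp only [hF, mul_pow, sq_abs]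
  -- continuity of F
  have hFeq : F = fun p : ℝ × ℝ => a * Real.exp (-|lam| * |p.1 * p.2|) * χ (p.2 / n) ^ 2 :=
    funext fun p => by rw [hF]; simp only; rw [hsq]
  have hFc : Continuous F := by
    rw [hFeq]
    exact ((continuous_const.mul ((continuous_const.mul
      ((continuous_fst.mul continuous_snd).abs)).rexp)).mul
      ((hχc.comp (continuous_snd.div_const _)).pow 2))
  -- bound for χ
  have hcs : HasCompactSupport χ :=
    IsCompact.of_isClosed_subset isCompact_Icc (isClosed_tsupport χ) hχsupp
  obtain ⟨C, hC⟩ := hcs.exists_bound_of_continuous hχc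
  have hχsq : ∀ z : ℝ, χ z ^ 2 ≤ C ^ 2 := by
    intro z
    have h1 := hC z
    rw [Real.norm_eq_abs] at h1
    nlinarith [sq_abs (χ z), abs_nonneg (χ z)]
  -- integrability of the dominating product
  have hIoi : IntegrableOn (fun x : ℝ => Real.exp (-|lam| * |x|)) (Set.Ioi 0) := by
    apply (exp_neg_integrableOn_Ioi 0 hlam0).congr_fun ?_ measurableSet_Ioi
    intro x hx
    simp only
    rw [abs_of_pos (show (0:ℝ) < x from hx)]
  have hIic : IntegrableOn (fun x : ℝ => Real.exp (-|lam| * |x|)) (Set.Iic 0) := by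
    rw [← Measure.map_neg_eq_self (volume : Measure ℝ)]
    have m : MeasurableEmbedding fun x : ℝ => -x := (Homeomorph.neg ℝ).measurableEmbedding
    rw [m.integrableOn_map_iff]
    simp_rw [Function.comp_def, abs_neg, Set.neg_preimage, Set.neg_Iic, neg_zero]
    exact Iff.mpr integrableOn_Ici_iff_integrableOn_Ioi hIoi
  have hg1 : Integrable (fun x : ℝ => a * Real.exp (-|lam| * |x|)) := by
    apply Integrable.const_mul
    rw [← integrableOn_univ, ← Set.Iic_union_Ioi (a := (0:ℝ))]
    exact hIic.union hIoi
  have hg2 : Integrable ((Set.Icc (n:ℝ) (2*n)).indicator (fun _ => C ^ 2)) :=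
    (integrable_indicator_iff measurableSet_Icc).2
      (integrableOn_const measure_Icc_lt_top.ne)
  have hG : Integrable (fun p : ℝ × ℝ =>
      (a * Real.exp (-|lam| * |p.1|)) *
      ((Set.Icc (n:ℝ) (2*n)).indicator (fun _ => C ^ 2) p.2)) := by
    rw [Measure.volume_eq_prod ℝ ℝ]
    exact hg1.mul_prod hg2
  -- integrability of F
  have hFint : Integrable F := by
    apply hG.mono' hFc.aestronglyMeasurable
    filter_upwards with p
    obtain ⟨x, y⟩ := p
    have hF0 : (0:ℝ) ≤ F (x, y) := by rw [hF]; positivity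
    rw [Real.norm_eq_abs, abs_of_nonneg hF0]
    by_cases hy : y ∈ Set.Icc (n:ℝ) (2*n)
    · rw [Set.indicator_of_mem hy]
      have hxy : |x| ≤ |x * y| := by
        rw [abs_mul]
        have h1 : (1:ℝ) ≤ |y| := by
          rw [abs_of_pos (lt_of_lt_of_le hnpos hy.1)]
          linarith [hy.1]
        exact le_mul_of_one_le_right (abs_nonneg x) h1
      have hexp : Real.exp (-|lam| * |x * y|) ≤ Real.exp (-|lam| * |x|) := by
        apply Real.exp_le_exp.2
        nlinarith
      rw [hF]
      simp only
      rw [hsq]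
      apply mul_le_mul _ (hχsq _) (sq_nonneg _) (by positivity)
      exact mul_le_mul_of_nonneg_left hexp ha0.le
    · rw [Set.indicator_of_notMem hy, mul_zero]
      have : χ (y / n) = 0 := by
        apply hχ0
        intro hm
        apply hy
        constructor
        · exact (one_le_div hnpos).1 hm.1
        · have h2 := (div_le_iff₀ hnpos).1 hm.2
          linarith
      rw [hF]
      simp [this]
  -- main computation
  have main : (∫ p : ℝ × ℝ, ‖ψ p‖ ^ 2) = ∫ z in (1:ℝ)..2, χ z ^ 2 / z := by
    have key : ∀ y : ℝ, (∫ x : ℝ, F (x, y)) = χ (y / n) ^ 2 / y := by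
      intro y
      by_cases hy : χ (y / n) = 0
      · simp [hF, hy]
      · have hmem : y / n ∈ Set.Icc (1:ℝ) 2 := by
          by_contra hmem'
          exact hy (hχ0 _ hmem')
        have hypos : (0:ℝ) < y := by
          have h1 : (n:ℝ) ≤ y := (one_le_div hnpos).1 hmem.1
          linarith
        calc (∫ x : ℝ, F (x, y)) = (∫ x : ℝ, h (x * y) ^ 2) * χ (y / n) ^ 2 := by
              simp only [hF]
              exact integral_mul_const _ _
          _ = y⁻¹ * χ (y / n) ^ 2 := by rw [hinner y hypos]
          _ = χ (y / n) ^ 2 / y := by ring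
    calc (∫ p : ℝ × ℝ, ‖ψ p‖ ^ 2) = ∫ p : ℝ × ℝ, F p := by
          apply MeasureTheory.integral_congr_ae
          filter_upwards with p using hnorm p
      _ = ∫ y : ℝ, ∫ x : ℝ, F (x, y) := by
          rw [Measure.volume_eq_prod ℝ ℝ]
          exact integral_prod_symm F (by rwa [← Measure.volume_eq_prod ℝ ℝ])
      _ = ∫ y : ℝ, χ (y / n) ^ 2 / y := by
          apply MeasureTheory.integral_congr_ae
          filter_upwards with y using key y
      _ = ∫ y in Set.Icc (n:ℝ) (2*n), χ (y / n) ^ 2 / y := by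
          symm
          apply setIntegral_eq_integral_of_forall_compl_eq_zero
          intro y hy
          have : χ (y / n) = 0 := by
            apply hχ0
            intro hm
            apply hy
            constructor
            · exact (one_le_div hnpos).1 hm.1
            · have h2 := (div_le_iff₀ hnpos).1 hm.2
              linarith
          simp [this]
      _ = ∫ y in Set.Ioc (n:ℝ) (2*n), χ (y / n) ^ 2 / y := integral_Icc_eq_integral_Ioc
      _ = ∫ y in (n:ℝ)..(2*n), χ (y / n) ^ 2 / y :=
          (intervalIntegral.integral_of_le (by linarith)).symm
      _ = ∫ y in (n:ℝ)..(2*n), (fun z => χ z ^ 2 / ((n:ℝ) * z)) (y / n) := by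
          apply intervalIntegral.integral_congr
          intro y _
          simp only
          rw [mul_div_cancel₀ _ hnpos.ne']
      _ = (n:ℝ) • ∫ z in ((n:ℝ)/n)..((2*n:ℝ)/n), χ z ^ 2 / ((n:ℝ) * z) := by
          simpa using intervalIntegral.integral_comp_div
            (fun z => χ z ^ 2 / ((n:ℝ) * z)) hnpos.ne'
      _ = ∫ z in (1:ℝ)..2, χ z ^ 2 / z := by
          rw [div_self hnpos.ne', mul_div_assoc, div_self hnpos.ne', mul_one,
            smul_eq_mul, ← intervalIntegral.integral_const_mul]
          apply intervalIntegral.integral_congr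
          intro z hz
          rw [Set.uIcc_of_le (by norm_num)] at hz
          have hz0 : z ≠ 0 := by
            intro h0
            rw [h0] at hz
            linarith [hz.1]
          field_simp
  refine ⟨main, ?_, ?_⟩
  · -- lower bound
    have hInt1 : IntervalIntegrable (fun z => χ z ^ 2) volume 1 2 :=
      (hχc.pow 2).intervalIntegrable 1 2
    have hInt2 : IntervalIntegrable (fun z => χ z ^ 2 / z) volume 1 2 := by
      apply ContinuousOn.intervalIntegrable
      apply ContinuousOn.div (hχc.pow 2).continuousOn continuousOn_id
      intro z hz
      rw [Set.uIcc_of_le (by norm_num)] at hz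
      have hz0 : (0:ℝ) < z := by linarith [hz.1]
      simpa using hz0.ne'
    have hle : (∫ z in (1:ℝ)..2, χ z ^ 2 / 2) ≤ ∫ z in (1:ℝ)..2, χ z ^ 2 / z := by
      apply intervalIntegral.integral_mono_on (by norm_num) (hInt1.div_const 2) hInt2
      intro z hz
      have h1 := hz.1
      have h2 := hz.2
      gcongr <;> linarith
    have heq : (∫ z in (1:ℝ)..2, χ z ^ 2 / 2) = 1 / 2 := by
      rw [intervalIntegral.integral_div, hχnorm]
    linarith
  · -- upper bound
    have hInt1 : IntervalIntegrable (fun z => χ z ^ 2) volume 1 2 :=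
      (hχc.pow 2).intervalIntegrable 1 2
    have hInt2 : IntervalIntegrable (fun z => χ z ^ 2 / z) volume 1 2 := by
      apply ContinuousOn.intervalIntegrable
      apply ContinuousOn.div (hχc.pow 2).continuousOn continuousOn_id
      intro z hz
      rw [Set.uIcc_of_le (by norm_num)] at hz
      have hz0 : (0:ℝ) < z := by linarith [hz.1]
      simpa using hz0.ne'
    have hle : (∫ z in (1:ℝ)..2, χ z ^ 2 / z) ≤ ∫ z in (1:ℝ)..2, χ z ^ 2 := by
      apply intervalIntegral.integral_mono_on (by norm_num) hInt2 hInt1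
      intro z hz
      exact div_le_self (sq_nonneg _) hz.1
    linarith [hχnorm ▸ hle]
end

section
/- Let h ∈ H¹(ℝ) ∩ L²(ℝ, t²dt) with ‖h‖ = 1, let f ∈ L²(ℝ) ∩ L²(ℝ, t²dt), and let χ : ℝ → ℝ be smooth with support in (1, k). Define ψ(x,y) = ( h(xy) + f(xy)/y² ) e^{i y²/2} χ(y/n) on ℝ². Then ∫_{ℝ²} |ψ|² dx dy ≥ ∫_1^k χ(z)²/z dz - (2/n²)‖f‖·(∫_1^k χ(z)²/z³ dz)^{1/2}·(∫_1^k χ(z)²/z dz)^{1/2} - (1/n⁴)‖f‖² ∫_1^k χ(z)²/z⁵ dz·... ; in particular, if ∫_1^k χ²/z dz = 1, then ∫_{ℝ²}|ψ|² dx dy ≥ 1/2 for all n sufficiently large. -/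
open MeasureTheory intervalIntegral

lemma aux_mul_preimage_null {N : Set ℝ} (hN : volume N = 0) :
    (volume : Measure (ℝ × ℝ)) {p : ℝ × ℝ | p.1 * p.2 ∈ N} = 0 := by
  obtain ⟨N', hsub, hmeas, hN'⟩ := exists_measurable_superset_of_null hN
  have hA : MeasurableSet ((fun p : ℝ × ℝ => p.1 * p.2) ⁻¹' N') :=
    (measurable_fst.mul measurable_snd) hmeas
  have key : (volume : Measure (ℝ × ℝ)) ((fun p : ℝ × ℝ => p.1 * p.2) ⁻¹' N') = 0 := by
    rw [Measure.volume_eq_prod, Measure.prod_apply hA]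
    have h0 : ∀ᵐ x : ℝ, x ≠ (0:ℝ) := by
      refine ae_iff.mpr ?_
      simpa using Real.volume_singleton (x := (0:ℝ))
    have hz : ∀ᵐ x : ℝ, volume (Prod.mk x ⁻¹' ((fun p : ℝ × ℝ => p.1 * p.2) ⁻¹' N')) = 0 := by
      filter_upwards [h0] with x hx
      have : Prod.mk x ⁻¹' ((fun p : ℝ × ℝ => p.1 * p.2) ⁻¹' N') = (x * ·) ⁻¹' N' := rfl
      rw [this, Real.volume_preimage_mul_left hx, hN', mul_zero]
    rw [lintegral_congr_ae hz, lintegral_zero]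
  exact measure_mono_null (fun p hp => hsub hp) key

lemma aux_ptwise_lb (a b s c : ℝ) (ha : 0 ≤ a) (hs : 0 ≤ s)
    (hc : 0 ≤ c) (htri : a ≤ s + c * b) (hb : 0 ≤ b) :
    (1 - c) * a^2 - c * b^2 ≤ s^2 := by
  nlinarith [mul_nonneg hc (sq_nonneg (s - b)), mul_nonneg (mul_nonneg hc hc) (sq_nonneg b),
    mul_nonneg hc (sq_nonneg (a - b)), mul_nonneg hc (sq_nonneg (a + b)), sq_nonneg (s + c*b - a)]

lemma aux_ptwise_ub (a b s : ℝ) (ha : 0 ≤ a) (hb : 0 ≤ b) (hs : 0 ≤ s)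
    (htri : s ≤ a + b) : s^2 ≤ 2 * a^2 + 2 * b^2 := by
  nlinarith [sq_nonneg (a - b), sq_nonneg (a + b - s)]

set_option maxHeartbeats 1000000 in
/-- Norm lower bound for the supercritical Weyl-sequence elements
ψ_n(x,y) = (h(xy) + f(xy)/y²) e^{iy²/2} χ(y/n): if ∫₁ᵏ χ²/z dz = 1 then
‖ψ_n‖² ≥ 1/2 for all sufficiently large n. -/
theorem stmt_19 (h f : ℝ → ℂ) (k : ℝ) (hk : 1 < k)
    (hh1 : ∀ t, DifferentiableAt ℝ h t)
    (hh2 : MemLp h 2 (volume : Measure ℝ)) (hh3 : MemLp (deriv h) 2 (volume : Measure ℝ))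
    (hh4 : MemLp (fun t : ℝ => (t : ℂ) * h t) 2 (volume : Measure ℝ))
    (hhnorm : (∫ t : ℝ, ‖h t‖ ^ 2) = 1)
    (hf2 : MemLp f 2 (volume : Measure ℝ))
    (hf4 : MemLp (fun t : ℝ => (t : ℂ) * f t) 2 (volume : Measure ℝ))
    (χ : ℝ → ℝ) (hχ : ContDiff ℝ (⊤ : ℕ∞) χ) (hχsupp : tsupport χ ⊆ Set.Ioo 1 k)
    (hχnorm : (∫ z in (1 : ℝ)..k, (χ z) ^ 2 / z) = 1)
    (ψ : ℕ → ℝ × ℝ → ℂ)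
    (hψ : ∀ (n : ℕ) (x y : ℝ), ψ n (x, y)
        = (h (x * y) + f (x * y) / (y : ℂ) ^ 2)
          * Complex.exp (Complex.I * (y : ℂ) ^ 2 / 2) * (χ (y / n) : ℂ)) :
    ∃ N : ℕ, ∀ n : ℕ, N ≤ n → (1 / 2 : ℝ) ≤ ∫ p : ℝ × ℝ, ‖ψ n p‖ ^ 2 := by
  have hcont : Continuous h := by
    rw [continuous_iff_continuousAt]; exact fun t => (hh1 t).continuousAt
  set B : ℝ := ∫ t : ℝ, ‖f t‖ ^ 2 with hBdef
  have hB : 0 ≤ B := integral_nonneg fun t => by positivity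
  have ih2 : Integrable (fun t : ℝ => ‖h t‖ ^ 2) := by
    exact (memLp_two_iff_integrable_sq_norm hh2.1).mp hh2
  have if2 : Integrable (fun t : ℝ => ‖f t‖ ^ 2) := by
    exact (memLp_two_iff_integrable_sq_norm hf2.1).mp hf2
  -- support facts
  have hχ0 : ∀ z : ℝ, z ∉ Set.Ioo (1:ℝ) k → χ z = 0 := fun z hz =>
    image_eq_zero_of_notMem_tsupport (fun hmem => hz (hχsupp hmem))
  have hχmem : ∀ z : ℝ, χ z ≠ 0 → z ∈ Set.Ioo (1:ℝ) k := by
    intro z hz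
    by_contra hzc
    exact hz (hχ0 z hzc)
  -- the profile function G
  set G : ℝ → ℝ := fun z => χ z ^ 2 / z with hGdef
  have hGcont : Continuous G := by
    rw [continuous_iff_continuousAt]
    intro z
    rcases ne_or_eq z 0 with hz | rfl
    · exact ((hχ.continuous.pow 2).continuousAt).div continuousAt_id hz
    · have hev : ∀ᶠ w in nhds (0:ℝ), G w = 0 := by
        filter_upwards [Iio_mem_nhds (by norm_num : (0:ℝ) < 1)] with w hw
        have : χ w = 0 := hχ0 w (fun hmem => absurd hmem.1 (not_lt.mpr (le_of_lt hw)))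
        simp [hGdef, this]
      exact (continuousAt_const (y := (0:ℝ))).congr (by filter_upwards [hev] with w hw; simp [hw])
  have hGc : HasCompactSupport G := by
    apply HasCompactSupport.intro (isCompact_Icc (a := (1:ℝ)) (b := k))
    intro z hz
    have : χ z = 0 := hχ0 z (fun hmem => hz ⟨le_of_lt hmem.1, le_of_lt hmem.2⟩)
    simp [hGdef, this]
  have hGint : Integrable G := hGcont.integrable_of_hasCompactSupport hGc
  have hGval : (∫ z : ℝ, G z) = 1 := by
    rw [← hχnorm]
    symm
    apply intervalIntegral.integral_eq_integral_of_support_subset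
    intro z hz
    have hχz : χ z ≠ 0 := by
      intro h0; apply hz; simp [hGdef, h0]
    exact Set.Ioo_subset_Ioc_self (hχmem z hχz)
  -- choice of N
  refine ⟨⌈2 * (1 + B)⌉₊ + 1, fun n hn => ?_⟩
  have hn1 : (1:ℝ) ≤ (n:ℝ) := by exact_mod_cast Nat.one_le_iff_ne_zero.mpr (by omega)
  have hnpos : (0:ℝ) < n := lt_of_lt_of_le zero_lt_one hn1
  have hn2 : 2 * (1 + B) ≤ (n:ℝ) ^ 2 := by
    have h1 : 2 * (1 + B) ≤ (⌈2 * (1 + B)⌉₊ : ℝ) := Nat.le_ceil _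
    have h2 : ((⌈2 * (1 + B)⌉₊ : ℕ) : ℝ) ≤ (n:ℝ) := by exact_mod_cast le_trans (by omega) hn
    nlinarith
  set c0 : ℝ := 1 - (1 + B) / (n:ℝ) ^ 2 with hc0def
  have hc0 : (1:ℝ)/2 ≤ c0 := by
    have hhalf : (1 + B) / (n:ℝ)^2 ≤ 1/2 := by
      rw [div_le_iff₀ (by positivity : (0:ℝ) < (n:ℝ)^2)]
      nlinarith
    simp only [hc0def]; linarith
  -- pointwise norm formula
  have hFeq : ∀ x y : ℝ, ‖ψ n (x, y)‖ ^ 2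
      = ‖h (x * y) + f (x * y) / (y:ℂ)^2‖ ^ 2 * (χ (y / n)) ^ 2 := by
    intro x y
    rw [hψ, norm_mul, norm_mul]
    have he : ‖Complex.exp (Complex.I * (y:ℂ) ^ 2 / 2)‖ = 1 := by
      have : Complex.I * (y:ℂ) ^ 2 / 2 = ((y ^ 2 / 2 : ℝ) : ℂ) * Complex.I := by
        push_cast; ring
      rw [this, Complex.norm_exp_ofReal_mul_I]
    rw [he, mul_one, Complex.norm_real]
    rw [mul_pow, Real.norm_eq_abs, sq_abs]
  -- measurable representative of f
  obtain ⟨f', hf'sm, hff'⟩ := hf2.1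
  set F : ℝ × ℝ → ℝ := fun p => ‖ψ n p‖ ^ 2 with hFdef
  have hFeq' : ∀ p : ℝ × ℝ,
      F p = ‖h (p.1 * p.2) + f (p.1 * p.2) / (p.2:ℂ)^2‖ ^ 2 * (χ (p.2 / n)) ^ 2 := by
    intro p
    have := hFeq p.1 p.2
    rwa [Prod.mk.eta] at this
  have hFxy : ∀ x y : ℝ,
      F (x, y) = ‖h (x * y) + f (x * y) / (y:ℂ)^2‖ ^ 2 * (χ (y / n)) ^ 2 := by
    intro x y; simpa using hFeq' (x, y)
  have hmulm : Measurable fun p : ℝ × ℝ => p.1 * p.2 := measurable_fst.mul measurable_snd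
  have hF'sm : StronglyMeasurable (fun p : ℝ × ℝ =>
      ‖h (p.1 * p.2) + f' (p.1 * p.2) / (p.2:ℂ)^2‖ ^ 2 * (χ (p.2 / n)) ^ 2) := by
    apply Measurable.stronglyMeasurable
    apply Measurable.mul
    · apply Measurable.pow_const
      apply Measurable.norm
      apply Measurable.add
      · exact hcont.measurable.comp hmulm
      · exact (hf'sm.measurable.comp hmulm).div
          ((Complex.measurable_ofReal.comp measurable_snd).pow_const 2)
    · exact ((hχ.continuous.measurable).comp (measurable_snd.div_const _)).pow_const 2
  have hFaesm : AEStronglyMeasurable F (volume : Measure (ℝ × ℝ)) := by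
    refine ⟨_, hF'sm, ?_⟩
    have hnull : volume {t : ℝ | f t ≠ f' t} = 0 := ae_iff.mp hff'
    have hnull2 := aux_mul_preimage_null hnull
    have hae : ∀ᵐ p : ℝ × ℝ, f (p.1 * p.2) = f' (p.1 * p.2) := by
      refine ae_iff.mpr ?_
      exact measure_mono_null (fun p hp => hp) hnull2
    filter_upwards [hae] with p hp
    rw [hFeq' p, hp]
  -- support geometry
  have hymem : ∀ y : ℝ, χ (y / n) ≠ 0 → (n:ℝ) < y := by
    intro y hy
    have hmem := hχmem _ hy
    have := hmem.1
    rw [lt_div_iff₀ hnpos] at this; linarith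
  -- Memℒp facts per y
  have hgmem : ∀ y : ℝ, MemLp (fun t => h t + f t / (y:ℂ)^2) 2 (volume : Measure ℝ) := by
    intro y
    apply hh2.add
    have : (fun t => f t / (y:ℂ)^2) = (((y:ℂ)^2)⁻¹ • f) := by
      funext t; simp [div_eq_mul_inv, mul_comm]
    rw [this]
    exact hf2.const_smul _
  have hΦint : ∀ y : ℝ, Integrable (fun t : ℝ => ‖h t + f t / (y:ℂ)^2‖ ^ 2) :=
    fun y => (memLp_two_iff_integrable_sq_norm (hgmem y).1).mp (hgmem y)
  have hΦnn : ∀ y : ℝ, 0 ≤ ∫ t : ℝ, ‖h t + f t / (y:ℂ)^2‖ ^ 2 :=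
    fun y => integral_nonneg fun t => sq_nonneg _
  -- lower bound for the t-integral
  have hIlb : ∀ y : ℝ, 1 ≤ y → 1 - (1 + B) / y^2 ≤ ∫ t : ℝ, ‖h t + f t / (y:ℂ)^2‖ ^ 2 := by
    intro y hy1
    have hy0 : (0:ℝ) < y := lt_of_lt_of_le zero_lt_one hy1
    set c : ℝ := 1 / y^2 with hcdef
    have hcnn : 0 ≤ c := by positivity
    have hc1 : c ≤ 1 := by rw [hcdef, div_le_one (by positivity)]; nlinarith
    have hpt : ∀ t : ℝ, (1 - c) * ‖h t‖^2 - c * ‖f t‖^2 ≤ ‖h t + f t / (y:ℂ)^2‖ ^ 2 := by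
      intro t
      have hng : ‖f t / (y:ℂ)^2‖ = c * ‖f t‖ := by
        rw [norm_div, norm_pow, Complex.norm_real, Real.norm_eq_abs, abs_of_pos hy0, hcdef]
        ring
      have htri : ‖h t‖ ≤ ‖h t + f t / (y:ℂ)^2‖ + ‖f t / (y:ℂ)^2‖ := by
        have h0 := norm_add_le (h t + f t / (y:ℂ)^2) (-(f t / (y:ℂ)^2))
        rw [add_neg_cancel_right, norm_neg] at h0
        exact h0
      rw [hng] at htri
      exact aux_ptwise_lb _ _ _ _ (norm_nonneg _) (norm_nonneg _) hcnn htri (norm_nonneg _)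
    calc 1 - (1+B)/y^2 = (1-c) * 1 - c * B := by rw [hcdef]; ring
    _ = ∫ t : ℝ, ((1-c) * ‖h t‖^2 - c * ‖f t‖^2) := by
        rw [integral_sub (ih2.const_mul _) (if2.const_mul _), MeasureTheory.integral_const_mul,
          MeasureTheory.integral_const_mul, hhnorm, ← hBdef]
    _ ≤ _ := integral_mono ((ih2.const_mul _).sub (if2.const_mul _)) (hΦint y) hpt
  -- upper bound for the t-integral
  have hIub : ∀ y : ℝ, 1 ≤ y → (∫ t : ℝ, ‖h t + f t / (y:ℂ)^2‖ ^ 2) ≤ 2 + 2 * B := by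
    intro y hy1
    have hy0 : (0:ℝ) < y := lt_of_lt_of_le zero_lt_one hy1
    have hpt : ∀ t : ℝ, ‖h t + f t / (y:ℂ)^2‖ ^ 2 ≤ 2 * ‖h t‖^2 + 2 * ‖f t‖^2 := by
      intro t
      have hng : ‖f t / (y:ℂ)^2‖ ≤ ‖f t‖ := by
        rw [norm_div, norm_pow, Complex.norm_real, Real.norm_eq_abs, abs_of_pos hy0]
        rw [div_le_iff₀ (by positivity)]
        have hy2 : (1:ℝ) ≤ y^2 := by nlinarith
        nlinarith [norm_nonneg (f t), hy2]
      have htri := le_trans (norm_add_le (h t) (f t / (y:ℂ)^2)) (by linarith [hng] : ‖h t‖ + ‖f t / (y:ℂ)^2‖ ≤ ‖h t‖ + ‖f t‖)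
      exact aux_ptwise_ub _ _ _ (norm_nonneg _) (norm_nonneg _) (norm_nonneg _) htri
    calc (∫ t : ℝ, ‖h t + f t/(y:ℂ)^2‖^2) ≤ ∫ t : ℝ, (2*‖h t‖^2 + 2*‖f t‖^2) :=
      integral_mono (hΦint y) ((ih2.const_mul 2).add (if2.const_mul 2)) hpt
    _ = 2 + 2*B := by
      rw [integral_add (ih2.const_mul 2) (if2.const_mul 2), MeasureTheory.integral_const_mul,
        MeasureTheory.integral_const_mul, hhnorm, ← hBdef]
      ring
  -- inner integral in x
  have hinner : ∀ y : ℝ, 0 < y → (∫ x : ℝ, F (x, y))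
      = (y⁻¹ * ∫ t : ℝ, ‖h t + f t / (y:ℂ)^2‖ ^ 2) * (χ (y / n)) ^ 2 := by
    intro y hy
    have hcongr : (fun x : ℝ => F (x, y))
        = fun x => (fun t => ‖h t + f t / (y:ℂ)^2‖ ^ 2) (x * y) * (χ (y / n)) ^ 2 := by
      funext x; exact hFxy x y
    have hcv := MeasureTheory.Measure.integral_comp_mul_right
      (fun t : ℝ => ‖h t + f t / (y:ℂ)^2‖ ^ 2) y
    rw [hcongr, MeasureTheory.integral_mul_const, hcv, smul_eq_mul, abs_of_pos (inv_pos.mpr hy)]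
  have hxint : ∀ y : ℝ, Integrable (fun x : ℝ => F (x, y)) := by
    intro y
    by_cases hy : χ (y / n) = 0
    · have hcongr : (fun x : ℝ => F (x, y)) = fun _ => (0:ℝ) := by
        funext x; rw [hFxy x y, hy]; ring
      rw [hcongr]; exact integrable_zero _ _ _
    · have hy0 : (0:ℝ) < y := lt_trans hnpos (hymem y hy)
      have hcongr : (fun x : ℝ => F (x, y))
          = fun x => (fun t => ‖h t + f t / (y:ℂ)^2‖ ^ 2) (x * y) * (χ (y / n)) ^ 2 := by
        funext x; exact hFxy x y
      rw [hcongr]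
      exact ((hΦint y).comp_mul_right' hy0.ne').mul_const _
  have hJnn : ∀ y : ℝ, 0 ≤ ∫ x : ℝ, F (x, y) :=
    fun y => integral_nonneg fun x => sq_nonneg _
  have hJub : ∀ y : ℝ, (∫ x : ℝ, F (x, y)) ≤ (2 + 2*B) * (χ (y/n))^2 := by
    intro y
    by_cases hy : χ (y / n) = 0
    · have hcongr : (fun x : ℝ => F (x, y)) = fun _ => (0:ℝ) := by
        funext x; rw [hFxy x y, hy]; ring
      rw [hcongr, hy]
      simp
    · have hny : (n:ℝ) < y := hymem y hy
      have hy0 : (0:ℝ) < y := lt_trans hnpos hny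
      have hy1 : (1:ℝ) ≤ y := le_trans hn1 (le_of_lt hny)
      rw [hinner y hy0]
      apply mul_le_mul_of_nonneg_right _ (sq_nonneg _)
      calc y⁻¹ * ∫ t : ℝ, ‖h t + f t / (y:ℂ)^2‖ ^ 2
          ≤ 1 * ∫ t : ℝ, ‖h t + f t / (y:ℂ)^2‖ ^ 2 := by
            apply mul_le_mul_of_nonneg_right _ (hΦnn y)
            rw [inv_le_one_iff₀]; right; exact hy1
      _ ≤ 2 + 2*B := by rw [one_mul]; exact hIub y hy1
  have heqnorm : (fun y : ℝ => ∫ x : ℝ, ‖F (x, y)‖) = fun y : ℝ => ∫ x : ℝ, F (x, y) := by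
    funext y; congr 1; funext x; exact Real.norm_of_nonneg (sq_nonneg _)
  have hmeas2 : AEStronglyMeasurable (fun y : ℝ => ∫ x : ℝ, F (x, y)) (volume : Measure ℝ) := by
    have := (AEStronglyMeasurable.prod_swap (f := F) hFaesm).integral_prod_right'
    simpa using this
  have hJint : Integrable (fun y : ℝ => ∫ x : ℝ, F (x, y)) := by
    apply Integrable.mono' (g := fun y : ℝ => (2 + 2*B) * (χ (y/n))^2) ?_ hmeas2 ?_
    · apply Continuous.integrable_of_hasCompactSupport
      · exact continuous_const.mul ((hχ.continuous.comp (continuous_id.div_const _)).pow 2)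
      · apply HasCompactSupport.intro (isCompact_Icc (a := (n:ℝ)) (b := k * n))
        intro y hy
        have hz : χ (y / n) = 0 := by
          apply hχ0
          intro hmem
          apply hy
          rw [Set.mem_Ioo, lt_div_iff₀ hnpos, div_lt_iff₀ hnpos] at hmem
          exact ⟨by nlinarith [hmem.1], le_of_lt hmem.2⟩
        simp [hz]
    · exact Filter.Eventually.of_forall fun y => by
        rw [Real.norm_of_nonneg (hJnn y)]; exact hJub y
  have hFint : Integrable F ((volume : Measure ℝ).prod (volume : Measure ℝ)) := by
    rw [integrable_prod_iff' hFaesm]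
    refine ⟨Filter.Eventually.of_forall hxint, ?_⟩
    rw [heqnorm]
    exact hJint
  have hFmain : (∫ p : ℝ × ℝ, ‖ψ n p‖ ^ 2) = ∫ y : ℝ, ∫ x : ℝ, F (x, y) :=
    integral_prod_symm F hFint
  -- the comparison function L
  set L : ℝ → ℝ := fun y => (c0 / n) * G (y / n) with hLdef
  have hLJ : ∀ y : ℝ, L y ≤ ∫ x : ℝ, F (x, y) := by
    intro y
    by_cases hy : χ (y / n) = 0
    · have hL0 : L y = 0 := by simp [hLdef, hGdef, hy]
      rw [hL0]; exact hJnn y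
    · have hny : (n:ℝ) < y := hymem y hy
      have hy0 : (0:ℝ) < y := lt_trans hnpos hny
      have hy1 : (1:ℝ) ≤ y := le_trans hn1 (le_of_lt hny)
      rw [hinner y hy0]
      have hL : L y = (y⁻¹ * c0) * (χ (y/n))^2 := by
        simp only [hLdef, hGdef]
        rw [div_div_eq_mul_div]
        field_simp
      rw [hL]
      apply mul_le_mul_of_nonneg_right _ (sq_nonneg _)
      apply mul_le_mul_of_nonneg_left _ (le_of_lt (inv_pos.mpr hy0))
      refine le_trans ?_ (hIlb y hy1)
      have hyn2 : (n:ℝ)^2 ≤ y^2 := by nlinarith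
      have hdd : (1+B)/y^2 ≤ (1+B)/(n:ℝ)^2 :=
        div_le_div_of_nonneg_left (by linarith) (by positivity) hyn2
      simp only [hc0def]
      linarith
  have hLint : Integrable L := by
    have hg : Integrable (fun y : ℝ => G (y / n)) := by
      have := hGint.comp_mul_right' (R := (n:ℝ)⁻¹) (by positivity)
      simpa [div_eq_mul_inv] using this
    exact hg.const_mul _
  have hLval : (∫ y : ℝ, L y) = c0 := by
    simp only [hLdef]
    rw [MeasureTheory.integral_const_mul, Measure.integral_comp_div, hGval, smul_eq_mul,
      abs_of_pos hnpos]
    field_simp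
  rw [hFmain]
  calc (1/2 : ℝ) ≤ c0 := hc0
  _ = ∫ y : ℝ, L y := hLval.symm
  _ ≤ ∫ y : ℝ, ∫ x : ℝ, F (x, y) := integral_mono hLint hJint hLJ
end
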